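/- Let M > 0, let k be a positive integer, and let a : Fin k → ℝ be injective with a i ∈ [0, M] for all i. Define t : Fin k → EuclideanSpace ℝ (Fin 2) by t i = (cos(π (a i) / M), sin(π (a i) / M)). Then t is a tuple of pairwise distinct unit vectors, and t is collision-free (with respect to the O(2)-action) if and only if for all indices i < j and l < m, |a i − a j| = |a l − a m| implies {a i, a j} = {a l, a m} (as two-element sets). That is, the set {a i} is collision-free on the line if and only if its half-circle embedding is collision-free on the circle. -/

import Mathlib

open RealInnerProductSpace

/-- Collision-free tuples (with respect to the `O(2)`-action). -/
def IsCollisionFree {k : ℕ} (t : Fin k → EuclideanSpace ℝ (Fin 2)) : Prop :=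
  ∀ i j l m : Fin k, i ≠ j → l ≠ m →
    (∃ g : EuclideanSpace ℝ (Fin 2) ≃ₗᵢ[ℝ] EuclideanSpace ℝ (Fin 2),
        ({g (t i), g (t j)} : Set (EuclideanSpace ℝ (Fin 2))) = {t l, t m}) →
    ({t i, t j} : Set (EuclideanSpace ℝ (Fin 2))) = {t l, t m}

/-- The half-circle embedding `τ(a) = (cos(π a / M), sin(π a / M))`. -/
noncomputable def halfCircleEmb (M : ℝ) (a : ℝ) : EuclideanSpace ℝ (Fin 2) :=
  WithLp.toLp 2 ![Real.cos (Real.pi * a / M), Real.sin (Real.pi * a / M)]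

noncomputable def cE : ℂ ≃ₗᵢ[ℝ] EuclideanSpace ℝ (Fin 2) :=
  Complex.isometryOfOrthonormal (EuclideanSpace.basisFun (Fin 2) ℝ)

lemma cE_apply (z : ℂ) : cE z = ![z.re, z.im] := by
  rw [cE, Complex.isometryOfOrthonormal_apply]
  ext j
  fin_cases j <;>
    simp [PiLp.add_apply, PiLp.smul_apply, EuclideanSpace.basisFun_apply,
      EuclideanSpace.single_apply]

lemma hce_eq (M x : ℝ) :
    halfCircleEmb M x = cE (Complex.exp ((Real.pi * x / M : ℝ) * Complex.I)) := by
  unfold halfCircleEmb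
  generalize Real.pi * x / M = θ
  ext j
  rw [cE_apply]
  fin_cases j <;>
    simp only [PiLp.toLp_apply, Complex.exp_ofReal_mul_I_re, Complex.exp_ofReal_mul_I_im,
      Matrix.cons_val_zero, Matrix.cons_val_one, Matrix.head_cons, Fin.isValue]

lemma abs_exp_sub_sq (θ₁ θ₂ : ℝ) :
    ‖Complex.exp ((θ₁:ℝ) * Complex.I) - Complex.exp ((θ₂:ℝ) * Complex.I)‖ ^ 2
      = 2 - 2 * Real.cos (θ₁ - θ₂) := by
  rw [Complex.sq_norm, Complex.normSq_apply]
  simp only [Complex.sub_re, Complex.sub_im, Complex.exp_ofReal_mul_I_re,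
    Complex.exp_ofReal_mul_I_im, Real.cos_sub]
  have h1 := Real.sin_sq_add_cos_sq θ₁
  have h2 := Real.sin_sq_add_cos_sq θ₂
  nlinarith [h1, h2]

lemma norm_sub_hce (M x y : ℝ) :
    ‖halfCircleEmb M x - halfCircleEmb M y‖ ^ 2
      = 2 - 2 * Real.cos (Real.pi * x / M - Real.pi * y / M) := by
  rw [hce_eq, hce_eq, ← LinearIsometryEquiv.map_sub, LinearIsometryEquiv.norm_map,
    abs_exp_sub_sq]

lemma norm_sub_hce_eq_iff (M : ℝ) (hM : 0 < M) {x y u v : ℝ}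
    (hx : x ∈ Set.Icc 0 M) (hy : y ∈ Set.Icc 0 M)
    (hu : u ∈ Set.Icc 0 M) (hv : v ∈ Set.Icc 0 M) :
    ‖halfCircleEmb M x - halfCircleEmb M y‖ = ‖halfCircleEmb M u - halfCircleEmb M v‖ ↔
      |x - y| = |u - v| := by
  have hpos : (0:ℝ) < Real.pi / M := div_pos Real.pi_pos hM
  have key : ∀ z w : ℝ, Real.pi * z / M - Real.pi * w / M = Real.pi / M * (z - w) := by
    intro z w; ring
  have habs : ∀ z w : ℝ, z ∈ Set.Icc 0 M → w ∈ Set.Icc 0 M →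
      |Real.pi / M * (z - w)| ≤ Real.pi := by
    intro z w hz hw
    rw [abs_mul, abs_of_pos hpos]
    have h1 : |z - w| ≤ M := abs_sub_le_iff.mpr ⟨by linarith [hz.2, hw.1], by linarith [hw.2, hz.1]⟩
    calc Real.pi / M * |z - w| ≤ Real.pi / M * M :=
          mul_le_mul_of_nonneg_left h1 hpos.le
      _ = Real.pi := by field_simp
  constructor
  · intro h
    have hsq : ‖halfCircleEmb M x - halfCircleEmb M y‖ ^ 2
        = ‖halfCircleEmb M u - halfCircleEmb M v‖ ^ 2 := by rw [h]
    rw [norm_sub_hce, norm_sub_hce, key, key] at hsq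
    have hcos : Real.cos (Real.pi / M * (x - y)) = Real.cos (Real.pi / M * (u - v)) := by
      linarith
    have hcos' : Real.cos |Real.pi / M * (x - y)| = Real.cos |Real.pi / M * (u - v)| := by
      rw [Real.cos_abs, Real.cos_abs]; exact hcos
    have := Real.injOn_cos ⟨abs_nonneg _, habs x y hx hy⟩ ⟨abs_nonneg _, habs u v hu hv⟩ hcos'
    rw [abs_mul, abs_mul, abs_of_pos hpos] at this
    exact mul_left_cancel₀ hpos.ne' this
  · intro h
    have hcos : Real.cos (Real.pi * x / M - Real.pi * y / M)
        = Real.cos (Real.pi * u / M - Real.pi * v / M) := by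
      rw [key, key, ← Real.cos_abs, ← Real.cos_abs (Real.pi / M * (u - v)),
        abs_mul, abs_mul, h]
    have h1 := norm_sub_hce M x y
    have h2 := norm_sub_hce M u v
    have hsq : ‖halfCircleEmb M x - halfCircleEmb M y‖ ^ 2
        = ‖halfCircleEmb M u - halfCircleEmb M v‖ ^ 2 := by rw [h1, h2, hcos]
    calc ‖halfCircleEmb M x - halfCircleEmb M y‖
        = Real.sqrt (‖halfCircleEmb M x - halfCircleEmb M y‖ ^ 2) :=
          (Real.sqrt_sq (norm_nonneg _)).symm
      _ = Real.sqrt (‖halfCircleEmb M u - halfCircleEmb M v‖ ^ 2) := by rw [hsq]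
      _ = ‖halfCircleEmb M u - halfCircleEmb M v‖ := Real.sqrt_sq (norm_nonneg _)

lemma rot_apply' (φ ψ : ℝ) :
    (cE.symm.trans ((rotation (Circle.exp φ)).trans cE)) (cE (Complex.exp ((ψ:ℝ) * Complex.I)))
      = cE (Complex.exp ((φ + ψ : ℝ) * Complex.I)) := by
  simp only [LinearIsometryEquiv.trans_apply, LinearIsometryEquiv.symm_apply_apply,
    rotation_apply, Circle.coe_exp, ← Complex.exp_add]
  congr 2
  push_cast
  ring

lemma refl_apply' (φ ψ : ℝ) :
    (cE.symm.trans (Complex.conjLIE.trans ((rotation (Circle.exp φ)).trans cE)))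
        (cE (Complex.exp ((ψ:ℝ) * Complex.I)))
      = cE (Complex.exp ((φ - ψ : ℝ) * Complex.I)) := by
  simp only [LinearIsometryEquiv.trans_apply, LinearIsometryEquiv.symm_apply_apply,
    Complex.conjLIE_apply, ← Complex.exp_conj, map_mul, Complex.conj_ofReal, Complex.conj_I,
    rotation_apply, Circle.coe_exp, ← Complex.exp_add]
  congr 2
  push_cast
  ring

/-- A set of points `a i ∈ [0, M]` on the line is collision-free in the turnpike sense if and
only if its half-circle embedding `t i = (cos(π aᵢ/M), sin(π aᵢ/M))` is a tuple of pairwise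
distinct unit vectors that is collision-free on the circle. -/
theorem halfCircleEmb_collisionFree_iff (M : ℝ) (hM : 0 < M) {k : ℕ} (hk : 0 < k)
    (a : Fin k → ℝ) (ha : Function.Injective a)
    (hrange : ∀ i, a i ∈ Set.Icc (0 : ℝ) M) :
    Function.Injective (fun i => halfCircleEmb M (a i)) ∧
    (∀ i, ‖halfCircleEmb M (a i)‖ = 1) ∧
    (IsCollisionFree (fun i => halfCircleEmb M (a i)) ↔
      ∀ i j l m : Fin k, i < j → l < m → |a i - a j| = |a l - a m| →
        ({a i, a j} : Set ℝ) = {a l, a m}) := by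
  have hti : ∀ n : Fin k,
      halfCircleEmb M (a n) = cE (Complex.exp ((Real.pi * a n / M : ℝ) * Complex.I)) :=
    fun n => hce_eq M (a n)
  have hinj : Function.Injective (fun i => halfCircleEmb M (a i)) := by
    intro x y h
    simp only at h
    have hnorm : ‖halfCircleEmb M (a x) - halfCircleEmb M (a y)‖
        = ‖halfCircleEmb M (a x) - halfCircleEmb M (a x)‖ := by
      rw [h, sub_self]
    have := (norm_sub_hce_eq_iff M hM (hrange x) (hrange y) (hrange x) (hrange x)).mp hnorm
    rw [sub_self, abs_zero, abs_eq_zero, sub_eq_zero] at this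
    exact ha this
  refine ⟨hinj, ?_, ?_⟩
  · intro i
    rw [EuclideanSpace.norm_eq]
    simp [halfCircleEmb, Fin.sum_univ_two, Real.norm_eq_abs, sq_abs,
      Real.cos_sq_add_sin_sq]
  constructor
  · -- collision-free on circle → collision-free on line
    intro hcf i j l m hij hlm habs
    have hg : ∃ g : EuclideanSpace ℝ (Fin 2) ≃ₗᵢ[ℝ] EuclideanSpace ℝ (Fin 2),
        ({g (halfCircleEmb M (a i)), g (halfCircleEmb M (a j))} :
          Set (EuclideanSpace ℝ (Fin 2)))
          = {halfCircleEmb M (a l), halfCircleEmb M (a m)} := by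
      rcases abs_eq_abs.mp habs with hd | hd
      · refine ⟨cE.symm.trans
          ((rotation (Circle.exp (Real.pi * a l / M - Real.pi * a i / M))).trans cE), ?_⟩
        have e1 : (Real.pi * a l / M - Real.pi * a i / M) + Real.pi * a i / M
            = Real.pi * a l / M := by ring
        have e2 : (Real.pi * a l / M - Real.pi * a i / M) + Real.pi * a j / M
            = Real.pi * a m / M := by
          field_simp
          linear_combination (-1) * hd
        rw [hti i, hti j, rot_apply', rot_apply', e1, e2, ← hti l, ← hti m]
      · refine ⟨cE.symm.trans (Complex.conjLIE.trans
          ((rotation (Circle.exp (Real.pi * a l / M + Real.pi * a i / M))).trans cE)), ?_⟩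
        have e1 : (Real.pi * a l / M + Real.pi * a i / M) - Real.pi * a i / M
            = Real.pi * a l / M := by ring
        have e2 : (Real.pi * a l / M + Real.pi * a i / M) - Real.pi * a j / M
            = Real.pi * a m / M := by
          field_simp
          linear_combination hd
        rw [hti i, hti j, refl_apply', refl_apply', e1, e2, ← hti l, ← hti m]
    have ht := hcf i j l m hij.ne hlm.ne hg
    simp only at ht
    rcases Set.pair_eq_pair_iff.mp ht with ⟨h1, h2⟩ | ⟨h1, h2⟩
    · have : i = l := hinj h1
      have : j = m := hinj h2
      subst this; subst ‹i = l›; rfl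
    · have hil : i = m := hinj h1
      have hjl : j = l := hinj h2
      subst hil; subst hjl
      exact Set.pair_comm _ _
  · -- collision-free on line → collision-free on circle
    intro hline
    have hline' : ∀ i j l m : Fin k, i ≠ j → l ≠ m → |a i - a j| = |a l - a m| →
        ({a i, a j} : Set ℝ) = {a l, a m} := by
      intro i j l m hij hlm h
      rcases lt_or_gt_of_ne hij with h1 | h1 <;> rcases lt_or_gt_of_ne hlm with h2 | h2
      · exact hline i j l m h1 h2 h
      · rw [Set.pair_comm (a l)]
        exact hline i j m l h1 h2 (by rw [h, abs_sub_comm])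
      · rw [Set.pair_comm (a i)]
        exact hline j i l m h1 h2 (by rw [← h, abs_sub_comm])
      · rw [Set.pair_comm (a i), Set.pair_comm (a l)]
        exact hline j i m l h1 h2 (by rw [abs_sub_comm, h, abs_sub_comm])
    intro i j l m hij hlm ⟨g, hg⟩
    simp only at hg ⊢
    have hnorm : ‖halfCircleEmb M (a i) - halfCircleEmb M (a j)‖
        = ‖halfCircleEmb M (a l) - halfCircleEmb M (a m)‖ := by
      rcases Set.pair_eq_pair_iff.mp hg with ⟨h1, h2⟩ | ⟨h1, h2⟩
      · rw [← h1, ← h2, ← LinearIsometryEquiv.map_sub, LinearIsometryEquiv.norm_map]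
      · rw [norm_sub_rev (halfCircleEmb M (a l)), ← h1, ← h2,
          ← LinearIsometryEquiv.map_sub, LinearIsometryEquiv.norm_map]
    have habs := (norm_sub_hce_eq_iff M hM (hrange i) (hrange j) (hrange l)
      (hrange m)).mp hnorm
    have hset := hline' i j l m hij hlm habs
    rcases Set.pair_eq_pair_iff.mp hset with ⟨h1, h2⟩ | ⟨h1, h2⟩
    · rw [h1, h2]
    · rw [h1, h2]
      exact Set.pair_comm _ _
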